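/- arXiv:2504.12742 — 7 statements merged into one kernel-verified Lean document; each statement's English description precedes it below -/
import Mathlib

section
/- Let γ ∈ [0,1) and let ν^t, y^t ∈ (ℝ^d)^n (t ≥ 0) satisfy ν^{t+1} = γ ν^t + (1−γ) y^t for all t ≥ 0, with Jν^0 = ν^0 and Jy^0 = y^0. Then for every T ≥ 0: Σ_{t=0}^{T+1} ‖Jν^t − ν^t‖² ≤ Σ_{t=0}^{T+1} ‖Jy^t − y^t‖². -/
open Finset

noncomputable section

/-- Average of a stacked vector. -/
def avg {d n : ℕ} (x : Fin n → EuclideanSpace ℝ (Fin d)) : EuclideanSpace ℝ (Fin d) :=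
  (n : ℝ)⁻¹ • ∑ i, x i

lemma avg_combo {d n : ℕ} (γ : ℝ) (x z : Fin n → EuclideanSpace ℝ (Fin d)) :
    avg (fun i => γ • x i + (1 - γ) • z i) = γ • avg x + (1 - γ) • avg z := by
  simp only [avg, Finset.sum_add_distrib, ← Finset.smul_sum, smul_add, smul_comm ((n:ℝ)⁻¹)]

lemma sq_combo_le (γ : ℝ) (hγ0 : 0 ≤ γ) (hγ1 : γ ≤ 1)
    {E : Type*} [NormedAddCommGroup E] [NormedSpace ℝ E] (a b : E) :
    ‖γ • a + (1 - γ) • b‖ ^ 2 ≤ γ * ‖a‖ ^ 2 + (1 - γ) * ‖b‖ ^ 2 := by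
  have h1 : ‖γ • a + (1 - γ) • b‖ ≤ γ * ‖a‖ + (1 - γ) * ‖b‖ := by
    calc ‖γ • a + (1 - γ) • b‖ ≤ ‖γ • a‖ + ‖(1 - γ) • b‖ := norm_add_le _ _
    _ = γ * ‖a‖ + (1 - γ) * ‖b‖ := by
        rw [norm_smul, norm_smul, Real.norm_of_nonneg hγ0,
          Real.norm_of_nonneg (by linarith)]
  have h0 : (0:ℝ) ≤ ‖γ • a + (1 - γ) • b‖ := norm_nonneg _
  have h2 : ‖γ • a + (1 - γ) • b‖ ^ 2 ≤ (γ * ‖a‖ + (1 - γ) * ‖b‖) ^ 2 :=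
    pow_le_pow_left₀ h0 h1 2
  nlinarith [mul_nonneg (mul_nonneg hγ0 (by linarith : (0:ℝ) ≤ 1 - γ))
    (sq_nonneg (‖a‖ - ‖b‖))]

/-- Polyak momentum consensus-error bound. -/
theorem polyak_momentum_consensus {d n : ℕ} (γ : ℝ) (hγ0 : 0 ≤ γ) (hγ1 : γ < 1)
    (ν y : ℕ → Fin n → EuclideanSpace ℝ (Fin d))
    (hrec : ∀ t : ℕ, ν (t + 1) = fun i => γ • ν t i + (1 - γ) • y t i)
    (hν0 : ∀ i, ν 0 i = avg (ν 0)) (hy0 : ∀ i, y 0 i = avg (y 0)) :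
    ∀ T : ℕ, ∑ t ∈ range (T + 2), ∑ i, ‖avg (ν t) - ν t i‖ ^ 2 ≤
      ∑ t ∈ range (T + 2), ∑ i, ‖avg (y t) - y t i‖ ^ 2 := by
  set eν : ℕ → ℝ := fun t => ∑ i, ‖avg (ν t) - ν t i‖ ^ 2 with heν
  set ey : ℕ → ℝ := fun t => ∑ i, ‖avg (y t) - y t i‖ ^ 2 with hey
  have heνnn : ∀ t, 0 ≤ eν t := fun t =>
    Finset.sum_nonneg fun i _ => sq_nonneg _
  have heynn : ∀ t, 0 ≤ ey t := fun t =>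
    Finset.sum_nonneg fun i _ => sq_nonneg _
  have he0 : eν 0 = 0 := by
    simp only [heν]
    apply Finset.sum_eq_zero
    intro i _
    rw [hν0 i, sub_self, norm_zero]; ring
  have hstep : ∀ t, eν (t + 1) ≤ γ * eν t + (1 - γ) * ey t := by
    intro t
    have havg : avg (ν (t + 1)) = γ • avg (ν t) + (1 - γ) • avg (y t) := by
      rw [hrec t]; exact avg_combo γ _ _
    have : eν (t + 1) ≤ ∑ i, (γ * ‖avg (ν t) - ν t i‖ ^ 2
        + (1 - γ) * ‖avg (y t) - y t i‖ ^ 2) := by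
      apply Finset.sum_le_sum
      intro i _
      have hpt : avg (ν (t+1)) - ν (t+1) i
          = γ • (avg (ν t) - ν t i) + (1 - γ) • (avg (y t) - y t i) := by
        rw [havg, hrec t]
        simp only [smul_sub]
        abel
      rw [hpt]
      exact sq_combo_le γ hγ0 (le_of_lt hγ1) _ _
    calc eν (t+1) ≤ _ := this
    _ = γ * eν t + (1 - γ) * ey t := by
        rw [Finset.sum_add_distrib, ← Finset.mul_sum, ← Finset.mul_sum]
  intro T
  obtain ⟨k, hk⟩ : ∃ k, T + 1 = k := ⟨T + 1, rfl⟩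
  have key : ∑ t ∈ range (k + 1), eν t ≤ γ * (∑ t ∈ range k, eν t)
      + (1 - γ) * ∑ t ∈ range k, ey t := by
    rw [Finset.sum_range_succ', he0, add_zero]
    calc ∑ t ∈ range k, eν (t + 1)
        ≤ ∑ t ∈ range k, (γ * eν t + (1 - γ) * ey t) :=
          Finset.sum_le_sum fun t _ => hstep t
    _ = γ * (∑ t ∈ range k, eν t) + (1 - γ) * ∑ t ∈ range k, ey t := by
          rw [Finset.sum_add_distrib, ← Finset.mul_sum, ← Finset.mul_sum]
  have hmono : ∑ t ∈ range k, eν t ≤ ∑ t ∈ range (k + 1), eν t := by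
    rw [Finset.sum_range_succ]; exact le_add_of_nonneg_right (heνnn k)
  have hySmono : ∑ t ∈ range k, ey t ≤ ∑ t ∈ range (k + 1), ey t := by
    rw [Finset.sum_range_succ]; exact le_add_of_nonneg_right (heynn k)
  have : (1 - γ) * (∑ t ∈ range (k + 1), eν t) ≤ (1 - γ) * ∑ t ∈ range k, ey t := by
    nlinarith
  have hfin : ∑ t ∈ range (k + 1), eν t ≤ ∑ t ∈ range (k + 1), ey t := by
    nlinarith
  have : T + 2 = k + 1 := by omega
  rw [this]
  exact hfin

end
end

section
/- Let γ ∈ [0,1) and let μ^t, ν^t, y^t ∈ (ℝ^d)^n satisfy μ^0 = ν^0 = 0, Jy^0 = y^0, and the Nesterov momentum updates μ^{t+1} = γ μ^t + (1−γ) y^t and ν^{t+1} = γ μ^{t+1} + (1−γ) y^t for all t ≥ 0. Then for every T ≥ 0: Σ_{t=0}^{T+1} ‖Jν^t − ν^t‖² ≤ ((1+3γ)/(1−γ)) Σ_{t=0}^{T+1} ‖Jy^t − y^t‖². -/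
open Finset

noncomputable section

namespace NesterovAux

variable {d n : ℕ}

/-- Consensus error. -/
def E (x : Fin n → EuclideanSpace ℝ (Fin d)) : ℝ := ∑ i, ‖avg x - x i‖ ^ 2

lemma E_nonneg (x : Fin n → EuclideanSpace ℝ (Fin d)) : 0 ≤ E x :=
  Finset.sum_nonneg fun i _ => by positivity

lemma E_zero : E (fun _ : Fin n => (0 : EuclideanSpace ℝ (Fin d))) = 0 := by
  simp [E, avg]

lemma avg_comb (c c' : ℝ) (a b : Fin n → EuclideanSpace ℝ (Fin d)) :
    avg (fun i => c • a i + c' • b i) = c • avg a + c' • avg b := by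
  simp only [avg, Finset.sum_add_distrib, ← Finset.smul_sum, smul_add]
  rw [smul_comm ((n : ℝ)⁻¹) c, smul_comm ((n : ℝ)⁻¹) c']

lemma sq_norm_comb (γ : ℝ) (h0 : 0 ≤ γ) (h1 : γ ≤ 1) (u v : EuclideanSpace ℝ (Fin d)) :
    ‖γ • u + (1 - γ) • v‖ ^ 2 ≤ γ * ‖u‖ ^ 2 + (1 - γ) * ‖v‖ ^ 2 := by
  have h := norm_add_le (γ • u) ((1 - γ) • v)
  rw [norm_smul, norm_smul, Real.norm_eq_abs, Real.norm_eq_abs, abs_of_nonneg h0,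
    abs_of_nonneg (by linarith)] at h
  have hn := norm_nonneg (γ • u + (1 - γ) • v)
  have hu := norm_nonneg u
  have hv := norm_nonneg v
  have h2 := mul_self_le_mul_self hn h
  nlinarith [h2, mul_nonneg (mul_nonneg h0 (by linarith : (0:ℝ) ≤ 1 - γ)) (sq_nonneg (‖u‖ - ‖v‖))]

lemma E_comb (γ : ℝ) (h0 : 0 ≤ γ) (h1 : γ ≤ 1) (a b : Fin n → EuclideanSpace ℝ (Fin d)) :
    E (fun i => γ • a i + (1 - γ) • b i) ≤ γ * E a + (1 - γ) * E b := by
  unfold E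
  rw [avg_comb, Finset.mul_sum, Finset.mul_sum, ← Finset.sum_add_distrib]
  refine Finset.sum_le_sum fun i _ => ?_
  have hrw : γ • avg a + (1 - γ) • avg b - (γ • a i + (1 - γ) • b i)
      = γ • (avg a - a i) + (1 - γ) • (avg b - b i) := by
    simp [smul_sub]; abel
  rw [hrw]
  exact sq_norm_comb γ h0 h1 _ _

end NesterovAux

open NesterovAux in
/-- Nesterov momentum consensus-error bound. -/
theorem nesterov_momentum_consensus {d n : ℕ} (γ : ℝ) (hγ0 : 0 ≤ γ) (hγ1 : γ < 1)
    (μ ν y : ℕ → Fin n → EuclideanSpace ℝ (Fin d))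
    (hμ0 : ∀ i, μ 0 i = 0) (hν0 : ∀ i, ν 0 i = 0)
    (hy0 : ∀ i, y 0 i = avg (y 0))
    (hμrec : ∀ t : ℕ, μ (t + 1) = fun i => γ • μ t i + (1 - γ) • y t i)
    (hνrec : ∀ t : ℕ, ν (t + 1) = fun i => γ • μ (t + 1) i + (1 - γ) • y t i) :
    ∀ T : ℕ, ∑ t ∈ range (T + 2), ∑ i, ‖avg (ν t) - ν t i‖ ^ 2 ≤
      ((1 + 3 * γ) / (1 - γ)) * ∑ t ∈ range (T + 2), ∑ i, ‖avg (y t) - y t i‖ ^ 2 := by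
  intro T
  have h1γ : (0 : ℝ) < 1 - γ := by linarith
  have hγle : γ ≤ 1 := le_of_lt hγ1
  -- rewrite goal in terms of E
  show ∑ t ∈ range (T + 2), E (ν t) ≤ ((1 + 3 * γ) / (1 - γ)) * ∑ t ∈ range (T + 2), E (y t)
  have hm0 : E (μ 0) = 0 := by
    have : μ 0 = fun _ => (0 : EuclideanSpace ℝ (Fin d)) := funext hμ0
    rw [this, E_zero]
  have hv0 : E (ν 0) = 0 := by
    have : ν 0 = fun _ => (0 : EuclideanSpace ℝ (Fin d)) := funext hν0
    rw [this, E_zero]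
  have hmrec : ∀ t, E (μ (t + 1)) ≤ γ * E (μ t) + (1 - γ) * E (y t) := fun t => by
    rw [hμrec t]; exact E_comb γ hγ0 hγle _ _
  have hvrec : ∀ t, E (ν (t + 1)) ≤ γ * E (μ (t + 1)) + (1 - γ) * E (y t) := fun t => by
    rw [hνrec t]; exact E_comb γ hγ0 hγle _ _
  -- key induction: partial sums of m are controlled by partial sums of b
  have hc : (1 - γ)⁻¹ * (1 - γ) = 1 := inv_mul_cancel₀ (ne_of_gt h1γ)
  have hcpos : (0 : ℝ) ≤ (1 - γ)⁻¹ := le_of_lt (inv_pos.2 h1γ)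
  have Q : ∀ k, ∑ t ∈ range k, E (μ t) + (1 - γ)⁻¹ * E (μ k) ≤ ∑ t ∈ range k, E (y t) := by
    intro k
    induction k with
    | zero => simp [hm0]
    | succ k ih =>
        rw [Finset.sum_range_succ, Finset.sum_range_succ]
        have h1 := hmrec k
        nlinarith [mul_le_mul_of_nonneg_left h1 hcpos, E_nonneg (μ k), E_nonneg (y k)]
  have hMsum : ∑ t ∈ range (T + 2), E (μ t) ≤ ∑ t ∈ range (T + 2), E (y t) := by
    have := Q (T + 2)
    nlinarith [E_nonneg (μ (T + 2))]
  have B := ∑ t ∈ range (T + 2), E (y t)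
  have hBnn : 0 ≤ ∑ t ∈ range (T + 2), E (y t) :=
    Finset.sum_nonneg fun t _ => E_nonneg _
  -- sum of v
  have hVsum : ∑ t ∈ range (T + 2), E (ν t) ≤ ∑ t ∈ range (T + 2), E (y t) := by
    rw [Finset.sum_range_succ' (fun t => E (ν t)) (T + 1), hv0, add_zero]
    have step1 : ∑ t ∈ range (T + 1), E (ν (t + 1))
        ≤ ∑ t ∈ range (T + 1), (γ * E (μ (t + 1)) + (1 - γ) * E (y t)) :=
      Finset.sum_le_sum fun t _ => hvrec t
    have step2 : ∑ t ∈ range (T + 1), (γ * E (μ (t + 1)) + (1 - γ) * E (y t))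
        = γ * ∑ t ∈ range (T + 1), E (μ (t + 1)) + (1 - γ) * ∑ t ∈ range (T + 1), E (y t) := by
      rw [Finset.sum_add_distrib, Finset.mul_sum, Finset.mul_sum]
    have stepm : ∑ t ∈ range (T + 1), E (μ (t + 1)) ≤ ∑ t ∈ range (T + 2), E (y t) := by
      have : ∑ t ∈ range (T + 2), E (μ t) = ∑ t ∈ range (T + 1), E (μ (t + 1)) := by
        rw [Finset.sum_range_succ' (fun t => E (μ t)) (T + 1), hm0, add_zero]
      linarith [hMsum, this.ge, this.le]
    have stepb : ∑ t ∈ range (T + 1), E (y t) ≤ ∑ t ∈ range (T + 2), E (y t) :=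
      Finset.sum_le_sum_of_subset_of_nonneg (Finset.range_subset_range.mpr (by omega))
        (fun t _ _ => E_nonneg _)
    nlinarith [step1, step2, stepm, stepb]
  have hcoef : (1 : ℝ) ≤ (1 + 3 * γ) / (1 - γ) := by
    rw [le_div_iff₀ h1γ]; linarith
  nlinarith [hVsum, hBnn, hcoef]

end
end

section
/- Let h : ℝ^d → ℝ be ρ-weakly convex with ρ ≥ 0, let α > 0 satisfy αρ < 1, let x̃, ν ∈ ℝ^d, and let u = prox_h^{α^{-1}}(x̃ − αν). Then for all x, w ∈ ℝ^d: h(u) ≤ h(x) − ⟨w, u − x⟩ + (α/2)‖w − ν‖² + (ρ/2)‖u − x‖² + (1/(2α))‖x̃ − x‖² − (1/(2α))‖u − x̃‖². -/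
/-!
The proximal objective `φ z = h z + ‖z - (x̃ - α ν)‖² / (2α)` is `(1/α - ρ)`-strongly convex, so its
minimiser `u` has quadratic growth: `φ u + (1/α - ρ)/2 ‖x - u‖² ≤ φ x`. Recentring the two squares
at `x̃` produces the term `-⟪ν, u - x⟫`, and Young's inequality
`⟪w - ν, u - x⟫ ≤ α/2 ‖w - ν‖² + ‖u - x‖²/(2α)` trades it for `-⟪w, u - x⟫`.
-/

open scoped RealInnerProductSpace

noncomputable section

section NormedSpace

variable {E : Type*} [NormedAddCommGroup E] [NormedSpace ℝ E] {s : Set E} {m n : ℝ}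
  {f g : E → ℝ}

nonrec lemma StrongConvexOn.add (hf : StrongConvexOn s m f) (hg : StrongConvexOn s n g) :
    StrongConvexOn s (m + n) (f + g) :=
  (hf.add hg).mono fun r => (by simp only [Pi.add_apply]; ring : _ = _).le

lemma StrongConvexOn.add_sq_norm_sub_le_of_isMinOn {u x : E} (hf : StrongConvexOn s m f)
    (hmin : IsMinOn f s u) (hu : u ∈ s) (hx : x ∈ s) :
    f u + m / 2 * ‖x - u‖ ^ 2 ≤ f x := by
  -- divide strong convexity along `[u, x]` by the step `t`, then let `t → 0`
  have hstep : Set.Ioo (0 : ℝ) 1 ⊆ {t | f u + (1 - t) * (m / 2 * ‖x - u‖ ^ 2) ≤ f x} := by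
    rintro t ⟨ht0, ht1⟩
    have hconv := hf.2 hu hx (sub_nonneg.2 ht1.le) ht0.le (sub_add_cancel 1 t)
    have hle := isMinOn_iff.1 hmin _ (hf.1 hu hx (sub_nonneg.2 ht1.le) ht0.le (sub_add_cancel 1 t))
    rw [norm_sub_rev, smul_eq_mul, smul_eq_mul] at hconv
    show f u + _ ≤ f x
    nlinarith
  have hclosed : IsClosed {t : ℝ | f u + (1 - t) * (m / 2 * ‖x - u‖ ^ 2) ≤ f x} :=
    isClosed_le (by fun_prop) continuous_const
  have h0 : (0 : ℝ) ∈ closure (Set.Ioo 0 1) := by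
    rw [closure_Ioo zero_ne_one]
    exact Set.left_mem_Icc.2 zero_le_one
  simpa only [Set.mem_ofPred_eq, sub_zero, one_mul] using hclosed.closure_subset_iff.2 hstep h0

end NormedSpace

section InnerProductSpace

variable {E : Type*} [NormedAddCommGroup E] [InnerProductSpace ℝ E]

lemma strongConvexOn_neg_iff_convexOn_add_sq_norm {s : Set E} {ρ : ℝ} {f : E → ℝ} :
    StrongConvexOn s (-ρ) f ↔ ConvexOn ℝ s fun z => f z + ρ / 2 * ‖z‖ ^ 2 := by
  rw [strongConvexOn_iff_convex]
  simp only [neg_div, neg_mul, sub_neg_eq_add]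

lemma strongConvexOn_mul_sq_norm_sub (c : ℝ) (y : E) :
    StrongConvexOn Set.univ (2 * c) fun z => c * ‖z - y‖ ^ 2 := by
  rw [strongConvexOn_iff_convex]
  refine ((LinearMap.convexOn ((-(2 * c)) • innerₛₗ ℝ y) convex_univ).add_const
    (c * ‖y‖ ^ 2)).congr fun z _ => ?_
  simp only [neg_smul, LinearMap.coe_neg, LinearMap.coe_smul, coe_innerₛₗ_apply, Pi.add_apply,
    Pi.neg_apply, Pi.smul_apply, smul_eq_mul, norm_sub_sq_real, real_inner_comm]
  ring

lemma real_inner_le_young {α : ℝ} (hα : 0 < α) (a b : E) :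
    ⟪a, b⟫ ≤ α / 2 * ‖a‖ ^ 2 + 1 / (2 * α) * ‖b‖ ^ 2 := by
  have hexp : ‖α • a - b‖ ^ 2 = 2 * α * (α / 2 * ‖a‖ ^ 2 + 1 / (2 * α) * ‖b‖ ^ 2 - ⟪a, b⟫) := by
    rw [norm_sub_sq_real, real_inner_smul_left, norm_smul, Real.norm_of_nonneg hα.le]
    field_simp
    ring
  have hnonneg : 0 ≤ 2 * α * (α / 2 * ‖a‖ ^ 2 + 1 / (2 * α) * ‖b‖ ^ 2 - ⟪a, b⟫) :=
    hexp ▸ sq_nonneg _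
  linarith [nonneg_of_mul_nonneg_right hnonneg (by positivity : 0 < 2 * α)]

end InnerProductSpace

theorem prox_step_descent_general {d : ℕ} (ρ α : ℝ) (hα : 0 < α)
    (h : EuclideanSpace ℝ (Fin d) → ℝ)
    (hwc : ConvexOn ℝ Set.univ (fun z => h z + (ρ / 2) * ‖z‖ ^ 2))
    (xt ν u : EuclideanSpace ℝ (Fin d))
    (hu : ∀ z, h u + (1 / (2 * α)) * ‖u - (xt - α • ν)‖ ^ 2 ≤
      h z + (1 / (2 * α)) * ‖z - (xt - α • ν)‖ ^ 2) :
    ∀ x w : EuclideanSpace ℝ (Fin d),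
      h u ≤ h x - ⟪w, u - x⟫ + (α / 2) * ‖w - ν‖ ^ 2 + (ρ / 2) * ‖u - x‖ ^ 2 +
        (1 / (2 * α)) * ‖xt - x‖ ^ 2 - (1 / (2 * α)) * ‖u - xt‖ ^ 2 := by
  intro x w
  set y := xt - α • ν
  have hgrowth := ((strongConvexOn_neg_iff_convexOn_add_sq_norm.2 hwc).add
      (strongConvexOn_mul_sq_norm_sub (1 / (2 * α)) y)).add_sq_norm_sub_le_of_isMinOn
    (isMinOn_univ_iff.2 hu) (Set.mem_univ u) (Set.mem_univ x)
  have hrecentre :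
      ‖x - y‖ ^ 2 - ‖u - y‖ ^ 2 = ‖xt - x‖ ^ 2 - ‖u - xt‖ ^ 2 - 2 * α * ⟪ν, u - x⟫ := by
    simp only [y, norm_sub_sq_real, inner_sub_right, real_inner_smul_right, real_inner_comm]
    ring
  have hyoung := real_inner_le_young hα (w - ν) (u - x)
  simp only [Pi.add_apply, norm_sub_rev x u, inner_sub_left] at hgrowth hyoung
  have hαc : 2 * α * (1 / (2 * α)) = 1 := by field_simp
  linear_combination hgrowth + hyoung + (1 / (2 * α)) * hrecentre - ⟪ν, u - x⟫ * hαc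

/-- Key descent inequality for the proximal step. -/
theorem prox_step_descent {d : ℕ} (ρ α : ℝ) (hρ : 0 ≤ ρ) (hα : 0 < α) (hαρ : α * ρ < 1)
    (h : EuclideanSpace ℝ (Fin d) → ℝ)
    (hwc : ConvexOn ℝ Set.univ (fun z => h z + (ρ / 2) * ‖z‖ ^ 2))
    (xt ν u : EuclideanSpace ℝ (Fin d))
    (hu : ∀ z, h u + (1 / (2 * α)) * ‖u - (xt - α • ν)‖ ^ 2 ≤
      h z + (1 / (2 * α)) * ‖z - (xt - α • ν)‖ ^ 2) :
    ∀ x w : EuclideanSpace ℝ (Fin d),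
      h u ≤ h x - ⟪w, u - x⟫ + (α / 2) * ‖w - ν‖ ^ 2 + (ρ / 2) * ‖u - x‖ ^ 2 +
        (1 / (2 * α)) * ‖xt - x‖ ^ 2 - (1 / (2 * α)) * ‖u - xt‖ ^ 2 :=
  prox_step_descent_general ρ α hα h hwc xt ν u hu

end
end

section
/- Let h : ℝ^d → ℝ be ρ-weakly convex with ρ ≥ 0, let α > 0 satisfy αρ < 1, let n ≥ 1, let x_i, ν_i ∈ ℝ^d for i = 1,…,n, let u_i = prox_h^{α^{-1}}(x_i − α ν_i), and set x̄ = (1/n)Σ_i x_i, ν̄ = (1/n)Σ_i ν_i, ū = (1/n)Σ_i u_i. Then h(ū) ≤ h(x̄) − ⟨ν̄, ū − x̄⟩ + (α/(2n)) Σ_{i=1}^n ‖ν̄ − ν_i‖² + ((1+6αρ)/(2αn)) Σ_{i=1}^n ‖x̄ − x_i‖² − ((1−6αρ)/(2αn)) Σ_{i=1}^n ‖u_i − x_i‖². -/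
open Finset
open scoped RealInnerProductSpace

noncomputable section

variable {E : Type*} [NormedAddCommGroup E] [InnerProductSpace ℝ E]

lemma norm_combo_sq (a b : E) (t : ℝ) :
    ‖(1-t) • a + t • b‖ ^ 2 = (1-t)*‖a‖^2 + t*‖b‖^2 - t*(1-t)*‖b-a‖^2 := by
  simp only [← real_inner_self_eq_norm_sq, inner_add_add_self, inner_sub_sub_self,
    real_inner_smul_left, real_inner_smul_right]
  rw [real_inner_comm b a]; ring

lemma norm_sub_sq'' (a b : E) : ‖a - b‖^2 = ‖a‖^2 - 2*⟪a,b⟫ + ‖b‖^2 := by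
  simp only [← real_inner_self_eq_norm_sq, inner_sub_sub_self]
  rw [real_inner_comm b a]; ring

lemma expand1 (p q v : E) (α : ℝ) :
    ‖p - (q - α • v)‖^2 = ‖p - q‖^2 + 2*α*⟪p - q, v⟫ + α^2*‖v‖^2 := by
  have h : p - (q - α • v) = (p - q) + α • v := by abel
  rw [h]
  simp only [← real_inner_self_eq_norm_sq, inner_add_add_self, real_inner_smul_left,
    real_inner_smul_right]
  rw [real_inner_comm v (p - q)]; ring

lemma young' (a b : E) (α : ℝ) : 2*α*⟪a,b⟫ ≤ α^2*‖a‖^2 + ‖b‖^2 := by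
  have h0 : (0:ℝ) ≤ ‖α • a - b‖^2 := sq_nonneg _
  rw [norm_sub_sq''] at h0
  simp only [norm_smul, real_inner_smul_left, mul_pow, Real.norm_eq_abs, sq_abs] at h0
  linarith

lemma sq_two' (a b : E) : ‖a - b‖^2 ≤ 2*‖a‖^2 + 2*‖b‖^2 := by
  have h0 : (0:ℝ) ≤ ‖a + b‖^2 := sq_nonneg _
  have h1 : ‖a + b‖^2 = ‖a‖^2 + 2*⟪a,b⟫ + ‖b‖^2 := by
    simp only [← real_inner_self_eq_norm_sq, inner_add_add_self]
    rw [real_inner_comm b a]; ring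
  rw [h1] at h0
  rw [norm_sub_sq'']
  linarith

lemma strong_min (ρ α : ℝ) (hα : 0 < α) (h : E → ℝ)
    (hwc : ConvexOn ℝ Set.univ (fun z => h z + (ρ / 2) * ‖z‖ ^ 2))
    (u y : E)
    (hmin : ∀ z : E, h u + (1 / (2 * α)) * ‖u - y‖ ^ 2 ≤ h z + (1 / (2 * α)) * ‖z - y‖ ^ 2)
    (z : E) :
    2*α*(h u) + ‖u - y‖^2 + (1 - α*ρ)*‖z - u‖^2 ≤ 2*α*(h z) + ‖z - y‖^2 := by
  have h2α : (0:ℝ) < 2*α := by linarith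
  have key : ∀ t : ℝ, 0 < t → t ≤ 1 →
      2*α*(h u) + ‖u - y‖^2 + (1-t)*((1 - α*ρ)*‖z - u‖^2) ≤ 2*α*(h z) + ‖z - y‖^2 := by
    intro t ht0 ht1
    set w := (1-t) • u + t • z with hw
    have hmin' := hmin w
    have hm2 : 2*α*(h u) + ‖u - y‖^2 ≤ 2*α*(h w) + ‖w - y‖^2 := by
      have hs : ∀ b c : ℝ, 2*α*(b + 1/(2*α)*c) = 2*α*b + c := by
        intro b c; field_simp
      have := mul_le_mul_of_nonneg_left hmin' h2α.le
      rw [hs, hs] at this; exact this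
    have hconv := hwc.2 (Set.mem_univ u) (Set.mem_univ z) (by linarith : (0:ℝ) ≤ 1-t)
      ht0.le (by ring : (1-t) + t = 1)
    simp only [smul_eq_mul] at hconv
    have hc2 := mul_le_mul_of_nonneg_left hconv h2α.le
    have hid2 : ‖w‖^2 = (1-t)*‖u‖^2 + t*‖z‖^2 - t*(1-t)*‖z-u‖^2 := norm_combo_sq u z t
    have hid1 : ‖w - y‖^2 = (1-t)*‖u-y‖^2 + t*‖z-y‖^2 - t*(1-t)*‖z-u‖^2 := by
      have hwy : w - y = (1-t) • (u-y) + t • (z-y) := by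
        have hy : (1-t) • y + t • y = y := by rw [← add_smul]; simp
        calc w - y = ((1-t) • u + t • z) - ((1-t) • y + t • y) := by rw [hy, hw]
        _ = (1-t) • (u-y) + t • (z-y) := by rw [smul_sub, smul_sub]; abel
      rw [hwy, norm_combo_sq]
      have : z - y - (u - y) = z - u := by abel
      rw [this]
    have hfin : t*(2*α*(h u) + ‖u - y‖^2 + (1-t)*((1 - α*ρ)*‖z - u‖^2)) ≤
        t*(2*α*(h z) + ‖z - y‖^2) := by
      rw [hid1] at hm2
      rw [hid2] at hc2
      nlinarith [hm2, hc2]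
    exact le_of_mul_le_mul_left hfin ht0
  set K := (1 - α*ρ)*‖z - u‖^2 with hKdef
  set M := 2*α*(h z) + ‖z - y‖^2 - (2*α*(h u) + ‖u - y‖^2) with hMdef
  have hM0 : 0 ≤ M := by
    have := key 1 one_pos le_rfl; simp only [sub_self, zero_mul] at this
    rw [hMdef]; linarith
  by_contra hcon
  push_neg at hcon
  have hKM : M < K := by rw [hMdef, hKdef]; linarith
  have hKpos : 0 < K := lt_of_le_of_lt hM0 hKM
  set t := (K - M)/(2*K) with htdef
  have ht0 : 0 < t := div_pos (by linarith) (by linarith)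
  have ht1 : t ≤ 1 := by rw [htdef, div_le_one (by linarith)]; linarith
  have hk := key t ht0 ht1
  have h1 : (1-t)*K ≤ M := by rw [hMdef]; linarith
  have h2 : (1-t)*K = (K+M)/2 := by rw [htdef]; field_simp; ring
  linarith

/-- Averaged descent inequality for the proximal step. -/
theorem prox_step_descent_avg {d n : ℕ} (hn : 1 ≤ n) (ρ α : ℝ) (hρ : 0 ≤ ρ) (hα : 0 < α)
    (hαρ : α * ρ < 1) (h : EuclideanSpace ℝ (Fin d) → ℝ)
    (hwc : ConvexOn ℝ Set.univ (fun z => h z + (ρ / 2) * ‖z‖ ^ 2))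
    (x ν u : Fin n → EuclideanSpace ℝ (Fin d))
    (hu : ∀ i, ∀ z, h (u i) + (1 / (2 * α)) * ‖u i - (x i - α • ν i)‖ ^ 2 ≤
      h z + (1 / (2 * α)) * ‖z - (x i - α • ν i)‖ ^ 2) :
    h (avg u) ≤ h (avg x) - ⟪avg ν, avg u - avg x⟫ +
      (α / (2 * n)) * ∑ i, ‖avg ν - ν i‖ ^ 2 +
      ((1 + 6 * α * ρ) / (2 * α * n)) * ∑ i, ‖avg x - x i‖ ^ 2 -
      ((1 - 6 * α * ρ) / (2 * α * n)) * ∑ i, ‖u i - x i‖ ^ 2 := by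

  have hNpos : (0:ℝ) < (n:ℝ) := by exact_mod_cast Nat.lt_of_lt_of_le Nat.zero_lt_one hn
  have hNne : (n:ℝ) ≠ 0 := hNpos.ne'
  set N : ℝ := (n:ℝ) with hNdef
  set S1 := ∑ i, ‖avg x - x i‖ ^ 2 with hS1
  set S2 := ∑ i, ‖u i - x i‖ ^ 2 with hS2
  set S3 := ∑ i, ‖avg ν - ν i‖ ^ 2 with hS3
  set T := ∑ i, ‖avg x - u i‖ ^ 2 with hT
  set H := ∑ i, h (u i) with hH
  set I := ∑ i, ⟪ν i, avg x - u i⟫ with hI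
  set J := ∑ i, ⟪avg ν - ν i, u i - avg x⟫ with hJ
  set U2 := ∑ i, ‖u i‖ ^ 2 with hU2
  set P := ⟪avg ν, avg u - avg x⟫ with hP
  have hsumu : ∑ i, u i = N • avg u := by
    rw [avg, smul_smul, mul_inv_cancel₀ hNne, one_smul]
  -- F1 (per i, then summed)
  have F1 : ∀ i, 2*α*(h (u i)) + (1 - α*ρ)*‖avg x - u i‖^2 ≤
      2*α*(h (avg x)) + 2*α*⟪ν i, avg x - u i⟫ + ‖avg x - x i‖^2 - ‖u i - x i‖^2 := by
    intro i
    have hs := strong_min ρ α hα h hwc (u i) (x i - α • ν i) (hu i) (avg x)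
    rw [expand1, expand1] at hs
    have hsub : 2*α*⟪avg x - x i, ν i⟫ - 2*α*⟪u i - x i, ν i⟫ = 2*α*⟪ν i, avg x - u i⟫ := by
      rw [← mul_sub, ← inner_sub_left]
      have he : avg x - x i - (u i - x i) = avg x - u i := by abel
      rw [he, real_inner_comm]
    linarith
  have A1 : 2*α*H + (1 - α*ρ)*T ≤ 2*α*N*(h (avg x)) + 2*α*I + S1 - S2 := by
    have hsum : ∑ i, (2*α*(h (u i)) + (1 - α*ρ)*‖avg x - u i‖^2) ≤
        ∑ i, (2*α*(h (avg x)) + 2*α*⟪ν i, avg x - u i⟫ + ‖avg x - x i‖^2 - ‖u i - x i‖^2) :=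
      Finset.sum_le_sum (fun i _ => F1 i)
    simp only [Finset.sum_add_distrib, Finset.sum_sub_distrib, ← Finset.mul_sum,
      Finset.sum_const, card_univ, Fintype.card_fin, nsmul_eq_mul] at hsum
    rw [hH, hT, hI, hS1, hS2]
    push_cast at hsum ⊢
    linarith
  -- A2 : I = -N*P + J
  have A2 : I = -(N*P) + J := by
    have hper : ∀ i : Fin n, ⟪ν i, avg x - u i⟫ =
        ⟪avg ν, avg x - u i⟫ + ⟪avg ν - ν i, u i - avg x⟫ := by
      intro i
      have e1 : u i - avg x = -(avg x - u i) := by abel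
      rw [e1, inner_neg_right, inner_sub_left]; ring
    rw [hI, hJ, Finset.sum_congr rfl (fun i _ => hper i), Finset.sum_add_distrib]
    have hfirst : ∑ i, ⟪avg ν, avg x - u i⟫ = -(N*P) := by
      rw [← inner_sum]
      have he : ∑ i : Fin n, (avg x - u i) = N • avg x - N • avg u := by
        rw [Finset.sum_sub_distrib, Finset.sum_const, card_univ, Fintype.card_fin, hsumu]
        congr 1
        rw [hNdef, ← Nat.cast_smul_eq_nsmul ℝ]
      rw [he, hP, inner_sub_right, inner_sub_right, real_inner_smul_right,
        real_inner_smul_right]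
      ring
    rw [hfirst]
  have A2' : 2*α*I = -(2*α*N*P) + 2*α*J := by rw [A2]; ring
  -- A3 : 2*α*J ≤ α^2*S3 + T
  have A3 : 2*α*J ≤ α^2*S3 + T := by
    have hsum : ∑ i, 2*α*⟪avg ν - ν i, u i - avg x⟫ ≤
        ∑ i, (α^2*‖avg ν - ν i‖^2 + ‖u i - avg x‖^2) :=
      Finset.sum_le_sum (fun (i : Fin n) _ => young' (avg ν - ν i) (u i - avg x) α)
    simp only [Finset.sum_add_distrib, ← Finset.mul_sum] at hsum
    have hrev : ∑ i, ‖u i - avg x‖^2 = T := by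
      rw [hT]; exact Finset.sum_congr rfl (fun i _ => by rw [norm_sub_rev])
    rw [hJ, hS3]
    linarith [hsum, hrev.le, hrev.ge]
  -- F3 summed : T ≤ 2*S1 + 2*S2
  have A4 : T ≤ 2*S1 + 2*S2 := by
    have hper : ∀ i : Fin n, ‖avg x - u i‖^2 ≤ 2*‖avg x - x i‖^2 + 2*‖u i - x i‖^2 := by
      intro i
      have hst := sq_two' (avg x - x i) (u i - x i)
      have he : avg x - x i - (u i - x i) = avg x - u i := by abel
      rw [he] at hst; exact hst
    have hsum : ∑ i, ‖avg x - u i‖^2 ≤ ∑ i, (2*‖avg x - x i‖^2 + 2*‖u i - x i‖^2) :=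
      Finset.sum_le_sum (fun i _ => hper i)
    simp only [Finset.sum_add_distrib, ← Finset.mul_sum] at hsum
    rw [hT, hS1, hS2]; linarith
  -- Jensen A5
  have A5 : 2*α*N*(h (avg u)) + α*ρ*N*‖avg u‖^2 ≤ 2*α*H + α*ρ*U2 := by
    have hw1 : ∑ _i : Fin n, N⁻¹ = 1 := by
      rw [Finset.sum_const, card_univ, Fintype.card_fin, nsmul_eq_mul, hNdef]
      field_simp
    have hjen := hwc.map_sum_le (t := Finset.univ) (w := fun _ : Fin n => N⁻¹) (p := u)
      (fun i _ => by positivity) hw1 (fun i _ => Set.mem_univ _)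
    have havg : ∑ i, N⁻¹ • u i = avg u := by rw [avg, Finset.smul_sum]
    rw [havg] at hjen
    simp only [smul_eq_mul] at hjen
    have hrhs : ∑ i, N⁻¹ * (h (u i) + ρ/2 * ‖u i‖^2) = N⁻¹ * (H + ρ/2 * U2) := by
      rw [← Finset.mul_sum, Finset.sum_add_distrib, ← Finset.mul_sum, hH, hU2]
    rw [hrhs] at hjen
    have h2 := mul_le_mul_of_nonneg_left hjen (show (0:ℝ) ≤ 2*α*N by positivity)
    have hc1 : 2*α*N*(N⁻¹*(H + ρ/2*U2)) = 2*α*H + α*ρ*U2 := by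
      rw [hNdef]; field_simp
    have hc2 : 2*α*N*(h (avg u) + ρ/2*‖avg u‖^2) = 2*α*N*(h (avg u)) + α*ρ*N*‖avg u‖^2 := by
      ring
    linarith [h2, hc1.le, hc1.ge, hc2.le, hc2.ge]
  -- A6 : U2 - N*‖avg u‖^2 ≤ T
  have A6 : U2 - N*‖avg u‖^2 ≤ T := by
    have hTid : T = U2 - 2*(N*⟪avg u, avg x⟫) + N*‖avg x‖^2 := by
      have hper : ∀ i : Fin n, ‖avg x - u i‖^2 = ‖u i‖^2 - 2*⟪u i, avg x⟫ + ‖avg x‖^2 := by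
        intro i; rw [norm_sub_rev, norm_sub_sq'']
      rw [hT, Finset.sum_congr rfl (fun i _ => hper i), Finset.sum_add_distrib,
        Finset.sum_sub_distrib, ← Finset.mul_sum, ← sum_inner, hsumu,
        real_inner_smul_left, Finset.sum_const, card_univ, Fintype.card_fin,
        nsmul_eq_mul, hU2]
    have hnn : (0:ℝ) ≤ N*‖avg u - avg x‖^2 := by positivity
    rw [norm_sub_sq''] at hnn
    linarith [hnn, hTid.le, hTid.ge]
  -- combine into KEY
  have hαρ0 : (0:ℝ) ≤ α*ρ := mul_nonneg hα.le hρ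
  have hS1nn : 0 ≤ S1 := Finset.sum_nonneg (fun i _ => sq_nonneg _)
  have hS2nn : 0 ≤ S2 := Finset.sum_nonneg (fun i _ => sq_nonneg _)
  have A6' : α*ρ*U2 - α*ρ*(N*‖avg u‖^2) ≤ α*ρ*T :=
    by linarith [mul_le_mul_of_nonneg_left A6 hαρ0]
  have A4' : α*ρ*T ≤ α*ρ*(2*S1 + 2*S2) := mul_le_mul_of_nonneg_left A4 hαρ0
  have KEY : 2*α*N*(h (avg u)) ≤ 2*α*N*(h (avg x)) - 2*α*N*P + α^2*S3
      + (1 + 6*α*ρ)*S1 - (1 - 6*α*ρ)*S2 := by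
    linarith [A1, A2', A3, A4', A5, A6', mul_nonneg hαρ0 hS1nn, mul_nonneg hαρ0 hS2nn]
  -- divide
  have h2αN : (0:ℝ) < 2*α*N := by positivity
  have hfin := (div_le_div_iff_of_pos_right h2αN).mpr KEY
  rw [mul_comm (2*α*N) (h (avg u))] at hfin
  rw [mul_div_assoc, div_self h2αN.ne', mul_one] at hfin
  refine hfin.trans (le_of_eq ?_)
  rw [hNdef]
  field_simp


end
end

section
/- For every integer T₀ ≥ 1 and all real numbers s ∈ [0,1) and λ ∈ (0,1): λ((1−s)² − λ^{1/T₀}) ≤ T₀^{T₀}(1−s)^{2T₀+2}/(1+T₀)^{T₀+1}. In particular, taking s = 0, λ(1 − λ^{1/T₀}) ≤ T₀^{T₀}/(1+T₀)^{T₀+1}. -/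
/-!
With `μ = λ^{1/T}`, so that `λ = μ^T`, both inequalities read
`μ^T (a - μ) ≤ T^T a^{T+1} / (1+T)^{T+1}` for some `a ≥ 0`: they bound `x ↦ x^T (a - x)` by its
value at the maximiser `m = T a / (1+T)`. That bound is the tangent-line (Bernoulli) inequality
`x^{T+1} + (T+1) x^T (m - x) ≤ m^{T+1}`, whose left side equals `T x^T (a - x)`.
-/

theorem pow_mul_sub_le {K : Type*} [Field K] [LinearOrder K] [IsStrictOrderedRing K]
    {T : ℕ} (hT : 0 < T) {a x : K} (ha : 0 ≤ a) (hx : 0 ≤ x) :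
    x ^ T * (a - x) ≤ (T : K) ^ T * a ^ (T + 1) / (1 + (T : K)) ^ (T + 1) := by
  have hT' : (0 : K) < T := by exact_mod_cast hT
  set m : K := T * a / (1 + T) with hm
  have hm0 : 0 ≤ m := by positivity
  have tangent : x ^ (T + 1) + (T + 1 : ℕ) * x ^ T * (m - x) ≤ m ^ (T + 1) := by
    simpa using pow_add_mul_le_add_pow hx (b := m - x) (by linarith) (T + 1)
  have lhs : x ^ (T + 1) + (T + 1 : ℕ) * x ^ T * (m - x) = T * (x ^ T * (a - x)) := by
    rw [hm]; push_cast; field_simp; ring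
  have rhs : m ^ (T + 1) = T * ((T : K) ^ T * a ^ (T + 1) / (1 + (T : K)) ^ (T + 1)) := by
    rw [hm, div_pow, mul_pow, pow_succ (T : K)]; ring
  rw [lhs, rhs] at tangent
  exact le_of_mul_le_mul_left tangent hT'

theorem delta_constants_complete_graph_best_general (T₀ : ℕ) (hT₀ : 1 ≤ T₀) (s lam : ℝ)
    (hlam0 : 0 < lam) :
    lam * ((1 - s) ^ 2 - lam ^ ((1 : ℝ) / T₀)) ≤
      (T₀ : ℝ) ^ T₀ * (1 - s) ^ (2 * T₀ + 2) / (1 + (T₀ : ℝ)) ^ (T₀ + 1) ∧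
    lam * (1 - lam ^ ((1 : ℝ) / T₀)) ≤ (T₀ : ℝ) ^ T₀ / (1 + (T₀ : ℝ)) ^ (T₀ + 1) := by
  have hroot : (lam ^ ((1 : ℝ) / T₀)) ^ T₀ = lam := by
    rw [one_div]; exact Real.rpow_inv_natCast_pow hlam0.le (by omega)
  have bound (a : ℝ) (ha : 0 ≤ a) : lam * (a - lam ^ ((1 : ℝ) / T₀)) ≤
      (T₀ : ℝ) ^ T₀ * a ^ (T₀ + 1) / (1 + (T₀ : ℝ)) ^ (T₀ + 1) := by
    have h := pow_mul_sub_le hT₀ ha (x := lam ^ ((1 : ℝ) / T₀)) (by positivity)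
    rwa [hroot] at h
  constructor
  · have h := bound ((1 - s) ^ 2) (sq_nonneg _)
    rwa [← pow_mul, mul_add, mul_one] at h
  · simpa using bound 1 zero_le_one

/-- The network constants are largest in the complete-graph
case. -/
theorem delta_constants_complete_graph_best (T₀ : ℕ) (hT₀ : 1 ≤ T₀) (s lam : ℝ)
    (hs0 : 0 ≤ s) (hs1 : s < 1) (hlam0 : 0 < lam) (hlam1 : lam < 1) :
    lam * ((1 - s) ^ 2 - lam ^ ((1 : ℝ) / T₀)) ≤
      (T₀ : ℝ) ^ T₀ * (1 - s) ^ (2 * T₀ + 2) / (1 + (T₀ : ℝ)) ^ (T₀ + 1) ∧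
    lam * (1 - lam ^ ((1 : ℝ) / T₀)) ≤ (T₀ : ℝ) ^ T₀ / (1 + (T₀ : ℝ)) ^ (T₀ + 1) :=
  delta_constants_complete_graph_best_general T₀ hT₀ s lam hlam0
end

section
/- Let γ ∈ [0,1), let μ^0 = ν^0 = 0 in (ℝ^d)^n, let y^t ∈ (ℝ^d)^n for t ≥ 0, and suppose μ^{t+1} = γ μ^t + (1−γ) y^t and ν^{t+1} = γ μ^{t+1} + (1−γ) y^t for all t ≥ 0. Then for every t ≥ 1: ‖Jν^t − ν^t‖² ≤ (1+3γ) Σ_{l=0}^{t−1} γ^{t−1−l} ‖Jy^l − y^l‖². -/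
open Finset

noncomputable section

private lemma avg_lin {d n : ℕ} (a b : ℝ) (x z : Fin n → EuclideanSpace ℝ (Fin d)) :
    avg (fun i => a • x i + b • z i) = a • avg x + b • avg z := by
  simp [avg, Finset.sum_add_distrib, Finset.smul_sum, smul_comm ((n:ℝ)⁻¹)]

/-- Jensen / Cauchy-Schwarz for norms. -/
private lemma jensen_norm_sq {ι : Type*} {E : Type*} [NormedAddCommGroup E] [NormedSpace ℝ E]
    (s : Finset ι) (c : ι → ℝ) (hc : ∀ l ∈ s, 0 ≤ c l) (v : ι → E) :
    ‖∑ l ∈ s, c l • v l‖ ^ 2 ≤ (∑ l ∈ s, c l) * ∑ l ∈ s, c l * ‖v l‖ ^ 2 := by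
  have h1 : ‖∑ l ∈ s, c l • v l‖ ≤ ∑ l ∈ s, c l * ‖v l‖ := by
    refine (norm_sum_le _ _).trans (le_of_eq (Finset.sum_congr rfl fun l hl => ?_))
    rw [norm_smul, Real.norm_eq_abs, abs_of_nonneg (hc l hl)]
  have h2 : (∑ l ∈ s, c l * ‖v l‖) ^ 2 ≤ (∑ l ∈ s, c l) * ∑ l ∈ s, c l * ‖v l‖ ^ 2 := by
    have := Finset.sum_mul_sq_le_sq_mul_sq s (fun l => Real.sqrt (c l))
      (fun l => Real.sqrt (c l) * ‖v l‖)
    have e1 : ∀ l ∈ s, Real.sqrt (c l) * (Real.sqrt (c l) * ‖v l‖) = c l * ‖v l‖ := by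
      intro l hl
      rw [← mul_assoc, Real.mul_self_sqrt (hc l hl)]
    have e2 : ∀ l ∈ s, Real.sqrt (c l) ^ 2 = c l := fun l hl => Real.sq_sqrt (hc l hl)
    have e3 : ∀ l ∈ s, (Real.sqrt (c l) * ‖v l‖) ^ 2 = c l * ‖v l‖ ^ 2 := by
      intro l hl
      rw [mul_pow, Real.sq_sqrt (hc l hl)]
    rwa [Finset.sum_congr rfl e1, Finset.sum_congr rfl e2, Finset.sum_congr rfl e3] at this
  calc ‖∑ l ∈ s, c l • v l‖ ^ 2 ≤ (∑ l ∈ s, c l * ‖v l‖) ^ 2 := by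
        apply pow_le_pow_left₀ (norm_nonneg _) h1
    _ ≤ _ := h2

/-- Pointwise Nesterov momentum consensus-error bound. -/
theorem nesterov_momentum_consensus_pointwise {d n : ℕ} (γ : ℝ) (hγ0 : 0 ≤ γ) (hγ1 : γ < 1)
    (μ ν y : ℕ → Fin n → EuclideanSpace ℝ (Fin d))
    (hμ0 : ∀ i, μ 0 i = 0) (hν0 : ∀ i, ν 0 i = 0)
    (hμrec : ∀ t : ℕ, μ (t + 1) = fun i => γ • μ t i + (1 - γ) • y t i)
    (hνrec : ∀ t : ℕ, ν (t + 1) = fun i => γ • μ (t + 1) i + (1 - γ) • y t i) :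
    ∀ t : ℕ, 1 ≤ t →
      ∑ i, ‖avg (ν t) - ν t i‖ ^ 2 ≤
        (1 + 3 * γ) * ∑ l ∈ range t, γ ^ (t - 1 - l) * ∑ i, ‖avg (y l) - y l i‖ ^ 2 := by
  -- consensus error notation
  set D : ℕ → Fin n → EuclideanSpace ℝ (Fin d) := fun l i => avg (y l) - y l i with hD
  -- recursion for the μ-consensus error
  have hDμ : ∀ t i, avg (μ (t + 1)) - μ (t + 1) i
      = γ • (avg (μ t) - μ t i) + (1 - γ) • D t i := by
    intro t i
    rw [hμrec t, avg_lin]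
    simp only [hD, smul_sub]
    abel
  -- closed form for the μ-consensus error
  have hμcf : ∀ t i, avg (μ t) - μ t i
      = ∑ l ∈ range t, ((1 - γ) * γ ^ (t - 1 - l)) • D l i := by
    intro t
    induction t with
    | zero =>
      intro i
      simp [avg, hμ0]
    | succ t ih =>
      intro i
      rw [hDμ t i, ih i, Finset.sum_range_succ, Finset.smul_sum]
      have hlast : ((1 - γ) * γ ^ (t + 1 - 1 - t)) • D t i = (1 - γ) • D t i := by
        norm_num
      rw [hlast]
      congr 1
      refine Finset.sum_congr rfl fun l hl => ?_
      rw [Finset.mem_range] at hl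
      rw [smul_smul]
      congr 1
      have h1 : t + 1 - 1 - l = (t - 1 - l) + 1 := by omega
      rw [h1, pow_succ]
      ring
  intro t ht
  obtain ⟨s, rfl⟩ : ∃ s, t = s + 1 := ⟨t - 1, by omega⟩
  -- coefficients
  set c : ℕ → ℝ := fun l => γ * ((1 - γ) * γ ^ (s - l)) + (if l = s then 1 - γ else 0) with hc
  have hmul : ∀ l : ℕ, (0:ℝ) ≤ γ * ((1 - γ) * γ ^ (s - l)) := fun l =>
    mul_nonneg hγ0 (mul_nonneg (by linarith) (pow_nonneg hγ0 _))
  have hcnn : ∀ l, 0 ≤ c l := by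
    intro l
    have h1 := hmul l
    have h2 : (0:ℝ) ≤ 1 - γ := by linarith
    by_cases h : l = s <;> simp [hc, h] <;> nlinarith
  -- closed form for the ν-consensus error
  have hνcf : ∀ i, avg (ν (s + 1)) - ν (s + 1) i = ∑ l ∈ range (s + 1), c l • D l i := by
    intro i
    have h0 : avg (ν (s + 1)) - ν (s + 1) i
        = γ • (avg (μ (s + 1)) - μ (s + 1) i) + (1 - γ) • D s i := by
      rw [hνrec s, avg_lin]
      simp only [hD, smul_sub]
      abel
    rw [h0, hμcf (s + 1) i, Finset.smul_sum]
    have hsplit : ∀ l ∈ range (s + 1), c l • D l i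
        = (γ * ((1 - γ) * γ ^ (s - l))) • D l i + (if l = s then 1 - γ else 0) • D l i := by
      intro l _
      rw [hc, add_smul]
    rw [Finset.sum_congr rfl hsplit, Finset.sum_add_distrib]
    congr 1
    · refine Finset.sum_congr rfl fun l hl => ?_
      rw [smul_smul]
      norm_num
    · have : ∀ l ∈ range (s + 1), (if l = s then 1 - γ else 0) • D l i
          = if l = s then (1 - γ) • D l i else 0 := by
        intro l _
        split <;> simp
      rw [Finset.sum_congr rfl this, Finset.sum_ite_eq' (range (s + 1)) s
        (fun l => (1 - γ) • D l i)]
      simp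
  -- sum of coefficients is at most 1
  have hcsum : ∑ l ∈ range (s + 1), c l ≤ 1 := by
    have hrefl : ∑ l ∈ range (s + 1), γ ^ (s - l) = ∑ k ∈ range (s + 1), γ ^ k := by
      have := Finset.sum_range_reflect (fun k => γ ^ k) (s + 1)
      simpa using this
    have hgeom : (∑ k ∈ range (s + 1), γ ^ k) * (γ - 1) = γ ^ (s + 1) - 1 :=
      geom_sum_mul γ (s + 1)
    have hpow : (0:ℝ) ≤ γ ^ (s + 1) := pow_nonneg hγ0 _
    have hsum1 : ∑ l ∈ range (s + 1), c l
        = γ * (1 - γ) * (∑ k ∈ range (s + 1), γ ^ k) + (1 - γ) := by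
      rw [hc]
      rw [Finset.sum_add_distrib, Finset.sum_ite_eq' (range (s + 1)) s (fun _ => 1 - γ)]
      simp only [Finset.mem_range, lt_add_iff_pos_right, zero_lt_one, if_true]
      congr 1
      rw [← hrefl, Finset.mul_sum]
      exact Finset.sum_congr rfl fun l _ => by ring
    rw [hsum1]
    nlinarith [hgeom, hpow, pow_nonneg hγ0 s]
  -- coefficient bound
  have hcb : ∀ l, c l ≤ (1 + 3 * γ) * γ ^ (s - l) := by
    intro l
    have hp : (0:ℝ) ≤ γ ^ (s - l) := pow_nonneg hγ0 _
    by_cases h : l = s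
    · subst h
      simp only [hc, Nat.sub_self, pow_zero, if_true]
      nlinarith
    · simp only [hc, h, if_false, add_zero]
      rw [show γ * ((1 - γ) * γ ^ (s - l)) = (γ * (1 - γ)) * γ ^ (s - l) by ring]
      refine mul_le_mul_of_nonneg_right ?_ hp
      nlinarith [sq_nonneg γ]
  -- put everything together
  have hsq : ∀ l, (0:ℝ) ≤ ∑ i, ‖D l i‖ ^ 2 :=
    fun l => Finset.sum_nonneg fun i _ => sq_nonneg _
  calc ∑ i, ‖avg (ν (s + 1)) - ν (s + 1) i‖ ^ 2
      ≤ ∑ i, ∑ l ∈ range (s + 1), c l * ‖D l i‖ ^ 2 := by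
        refine Finset.sum_le_sum fun i _ => ?_
        rw [hνcf i]
        refine (jensen_norm_sq (range (s + 1)) c (fun l _ => hcnn l) (fun l => D l i)).trans ?_
        have hnn : (0:ℝ) ≤ ∑ l ∈ range (s + 1), c l * ‖D l i‖ ^ 2 :=
          Finset.sum_nonneg fun l _ => mul_nonneg (hcnn l) (sq_nonneg _)
        nlinarith [hcsum]
    _ = ∑ l ∈ range (s + 1), c l * ∑ i, ‖D l i‖ ^ 2 := by
        rw [Finset.sum_comm]
        exact Finset.sum_congr rfl fun l _ => by rw [Finset.mul_sum]
    _ ≤ ∑ l ∈ range (s + 1), (1 + 3 * γ) * (γ ^ (s - l) * ∑ i, ‖D l i‖ ^ 2) := by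
        refine Finset.sum_le_sum fun l _ => ?_
        rw [← mul_assoc]
        exact mul_le_mul_of_nonneg_right (hcb l) (hsq l)
    _ = (1 + 3 * γ) * ∑ l ∈ range (s + 1), γ ^ (s + 1 - 1 - l) * ∑ i, ‖avg (y l) - y l i‖ ^ 2 := by
        rw [← Finset.mul_sum]
        simp [hD]

end
end

section
/- Let h : ℝ^d → ℝ be ρ-weakly convex with ρ ≥ 0, let α > 0 satisfy αρ < 1, let W be a symmetric doubly stochastic n×n matrix, set J_n = (1/n)·(all-ones matrix) and λ = ‖W − J_n‖ (operator norm for the Euclidean norm). For x, ν ∈ (ℝ^d)^n define u ∈ (ℝ^d)^n by u_i = prox_h^{α^{-1}}(x_i − α ν_i) and x⁺ = W u (W acting blockwise). Then ‖Jx⁺ − x⁺‖ ≤ (λ/(1−αρ)) ‖(x − Jx) − α(ν − Jν)‖. -/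
/-!
The prox objective `z ↦ h z + ‖z - y‖² / (2α)` is `(α⁻¹ - ρ)`-strongly convex, so it grows
quadratically away from its minimiser; adding the growth bounds of two prox points `uᵢ = prox yᵢ`
at each other gives `(1 - αρ) ‖u₁ - u₂‖² ≤ ⟪u₁ - u₂, y₁ - y₂⟫`, i.e. the prox map is
`(1 - αρ)⁻¹`-Lipschitz. Through `∑ᵢ ∑ⱼ ‖vᵢ - vⱼ‖² = 2n ‖Jv - v‖²` this pairwise bound passes to
consensus errors. Finally, as `W` is doubly stochastic, `x⁺ - Jx⁺ = (W - J)(u - Ju)`, and a matrix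
acting blockwise is bounded by its operator norm on `ℝⁿ` (apply it coordinate by coordinate).
-/

open Finset

noncomputable section

/-- Blockwise action of an `n × n` matrix on a stacked vector. -/
def matAct {d n : ℕ} (W : Matrix (Fin n) (Fin n) ℝ)
    (x : Fin n → EuclideanSpace ℝ (Fin d)) : Fin n → EuclideanSpace ℝ (Fin d) :=
  fun i => ∑ j, W i j • x j

/-- The averaging matrix `J_n = (1/n) 𝟙𝟙ᵀ`. -/
def Jmat (n : ℕ) : Matrix (Fin n) (Fin n) ℝ := Matrix.of fun _ _ => (n : ℝ)⁻¹

open Filter Topology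

section ProxLipschitz

variable {E : Type*} [NormedAddCommGroup E] [InnerProductSpace ℝ E]

theorem StrongConvexOn.add_sq_norm_le_of_isMinOn {s : Set E} {m : ℝ} {f : E → ℝ}
    (hf : StrongConvexOn s m f) {x y : E} (hmin : IsMinOn f s x) (hx : x ∈ s) (hy : y ∈ s) :
    f x + m / 2 * ‖y - x‖ ^ 2 ≤ f y := by
  have hsegment : ∀ t ∈ Set.Ioo (0 : ℝ) 1, f x + (1 - t) * (m / 2 * ‖y - x‖ ^ 2) ≤ f y := by
    rintro t ⟨ht₀, ht₁⟩
    have hconv := hf.2 hx hy (sub_nonneg.2 ht₁.le) ht₀.le (sub_add_cancel 1 t)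
    have hle : f x ≤ _ := hmin (hf.1 hx hy (sub_nonneg.2 ht₁.le) ht₀.le (sub_add_cancel 1 t))
    simp only [smul_eq_mul, norm_sub_rev x y] at hconv
    have : t * (f x + (1 - t) * (m / 2 * ‖y - x‖ ^ 2)) ≤ t * f y := by linarith
    exact le_of_mul_le_mul_left this ht₀
  have hlim : Tendsto (fun t : ℝ => f x + (1 - t) * (m / 2 * ‖y - x‖ ^ 2)) (𝓝[>] 0)
      (𝓝 (f x + (1 - 0) * (m / 2 * ‖y - x‖ ^ 2))) :=
    ((continuous_const.add ((continuous_const.sub continuous_id).mul continuous_const)).tendsto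
      0).mono_left nhdsWithin_le_nhds
  rw [sub_zero, one_mul] at hlim
  exact le_of_tendsto hlim (eventually_of_mem (Ioo_mem_nhdsGT one_pos) hsegment)

theorem strongConvexOn_prox_objective {ρ α : ℝ} {h : E → ℝ}
    (hwc : ConvexOn ℝ Set.univ (fun z => h z + (ρ / 2) * ‖z‖ ^ 2)) (y : E) :
    StrongConvexOn Set.univ (α⁻¹ - ρ) (fun z => h z + (1 / (2 * α)) * ‖z - y‖ ^ 2) := by
  rw [strongConvexOn_iff_convex]
  have haffine : ConvexOn ℝ Set.univ (fun z => -(α⁻¹ * inner ℝ z y)) :=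
    (-(α⁻¹ • (innerₛₗ ℝ).flip y)).convexOn convex_univ
  refine ((hwc.add haffine).add_const ((1 / (2 * α)) * ‖y‖ ^ 2)).congr fun z _ => ?_
  simp only [Pi.add_apply, norm_sub_sq_real]
  ring

theorem prox_lipschitz {ρ α : ℝ} (hα : 0 < α) {h : E → ℝ}
    (hwc : ConvexOn ℝ Set.univ (fun z => h z + (ρ / 2) * ‖z‖ ^ 2)) {y₁ y₂ u₁ u₂ : E}
    (hu₁ : ∀ z, h u₁ + (1 / (2 * α)) * ‖u₁ - y₁‖ ^ 2 ≤ h z + (1 / (2 * α)) * ‖z - y₁‖ ^ 2)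
    (hu₂ : ∀ z, h u₂ + (1 / (2 * α)) * ‖u₂ - y₂‖ ^ 2 ≤ h z + (1 / (2 * α)) * ‖z - y₂‖ ^ 2) :
    (1 - α * ρ) * ‖u₁ - u₂‖ ≤ ‖y₁ - y₂‖ := by
  have hg₁ := (strongConvexOn_prox_objective hwc y₁).add_sq_norm_le_of_isMinOn
    (isMinOn_univ_iff.2 hu₁) trivial (Set.mem_univ u₂)
  have hg₂ := (strongConvexOn_prox_objective hwc y₂).add_sq_norm_le_of_isMinOn
    (isMinOn_univ_iff.2 hu₂) trivial (Set.mem_univ u₁)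
  rw [norm_sub_rev u₂ u₁] at hg₁
  have hcross : ‖u₂ - y₁‖ ^ 2 - ‖u₁ - y₁‖ ^ 2 + (‖u₁ - y₂‖ ^ 2 - ‖u₂ - y₂‖ ^ 2) =
      2 * inner ℝ (u₁ - u₂) (y₁ - y₂) := by
    simp only [norm_sub_sq_real, inner_sub_left, inner_sub_right, real_inner_comm]
    ring
  have hsum : (α⁻¹ - ρ) * ‖u₁ - u₂‖ ^ 2 ≤ 1 / (2 * α) * (2 * inner ℝ (u₁ - u₂) (y₁ - y₂)) := by
    linear_combination hg₁ + hg₂ + 1 / (2 * α) * hcross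
  have hinner : (1 - α * ρ) * ‖u₁ - u₂‖ ^ 2 ≤ ‖u₁ - u₂‖ * ‖y₁ - y₂‖ :=
    calc (1 - α * ρ) * ‖u₁ - u₂‖ ^ 2 = α * ((α⁻¹ - ρ) * ‖u₁ - u₂‖ ^ 2) := by field_simp
      _ ≤ α * (1 / (2 * α) * (2 * inner ℝ (u₁ - u₂) (y₁ - y₂))) := by gcongr
      _ = inner ℝ (u₁ - u₂) (y₁ - y₂) := by field_simp
      _ ≤ ‖u₁ - u₂‖ * ‖y₁ - y₂‖ := real_inner_le_norm _ _
  rcases (norm_nonneg (u₁ - u₂)).eq_or_lt with hzero | hpos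
  · rw [← hzero, mul_zero]
    exact norm_nonneg _
  · exact le_of_mul_le_mul_right (by nlinarith) hpos

end ProxLipschitz

section Consensus

variable {d n : ℕ}

theorem sum_sub_avg_eq_zero (v : Fin n → EuclideanSpace ℝ (Fin d)) : ∑ i, (v i - avg v) = 0 := by
  rcases Nat.eq_zero_or_pos n with rfl | hn
  · simp
  rw [sum_sub_distrib, sum_const, card_univ, Fintype.card_fin, avg, ← Nat.cast_smul_eq_nsmul ℝ,
    smul_inv_smul₀ (by positivity), sub_self]

theorem avg_sub_smul (x ν : Fin n → EuclideanSpace ℝ (Fin d)) (α : ℝ) :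
    avg (fun i => x i - α • ν i) = avg x - α • avg ν := by
  simp only [avg, sum_sub_distrib, ← smul_sum, smul_sub, smul_comm α]

theorem sum_sum_norm_sub_sq (v : Fin n → EuclideanSpace ℝ (Fin d)) :
    ∑ i, ∑ j, ‖v i - v j‖ ^ 2 = 2 * n * ∑ i, ‖avg v - v i‖ ^ 2 := by
  have hsplit : ∀ i j, ‖v i - v j‖ ^ 2 = ‖v i - avg v‖ ^ 2
      - 2 * inner ℝ (v i - avg v) (v j - avg v) + ‖v j - avg v‖ ^ 2 := fun i j => by
    rw [← norm_sub_sq_real, sub_sub_sub_cancel_right]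
  have hcross : ∀ i, ∑ j, inner ℝ (v i - avg v) (v j - avg v) = 0 := fun i => by
    rw [← inner_sum, sum_sub_avg_eq_zero, inner_zero_right]
  simp only [hsplit, sum_add_distrib, sum_sub_distrib, ← mul_sum, hcross, mul_zero, sub_zero,
    sum_const, card_univ, Fintype.card_fin, nsmul_eq_mul, norm_sub_rev (v _) (avg v)]
  ring

theorem sum_norm_avg_sub_sq_le {u y : Fin n → EuclideanSpace ℝ (Fin d)} {c : ℝ}
    (hpair : ∀ i j, ‖u i - u j‖ ≤ c * ‖y i - y j‖) :
    ∑ i, ‖avg u - u i‖ ^ 2 ≤ c ^ 2 * ∑ i, ‖avg y - y i‖ ^ 2 := by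
  rcases Nat.eq_zero_or_pos n with rfl | hn
  · simp
  have hpair_sq : ∑ i, ∑ j, ‖u i - u j‖ ^ 2 ≤ c ^ 2 * ∑ i, ∑ j, ‖y i - y j‖ ^ 2 := by
    simp only [mul_sum, ← mul_pow]
    exact sum_le_sum fun i _ => sum_le_sum fun j _ =>
      pow_le_pow_left₀ (norm_nonneg _) (hpair i j) 2
  rw [sum_sum_norm_sub_sq, sum_sum_norm_sub_sq, mul_left_comm] at hpair_sq
  exact le_of_mul_le_mul_left hpair_sq (by positivity)

theorem avg_matAct {W : Matrix (Fin n) (Fin n) ℝ} (hcol : ∀ j, ∑ i, W i j = 1)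
    (v : Fin n → EuclideanSpace ℝ (Fin d)) : avg (matAct W v) = avg v := by
  simp only [avg, matAct]
  rw [sum_comm]
  simp only [← sum_smul, hcol, one_smul]

theorem matAct_sub_avg {W : Matrix (Fin n) (Fin n) ℝ} (hrow : ∀ i, ∑ j, W i j = 1)
    (hcol : ∀ j, ∑ i, W i j = 1) (u : Fin n → EuclideanSpace ℝ (Fin d)) (i : Fin n) :
    matAct W u i - avg (matAct W u) = matAct (W - Jmat n) (fun j => u j - avg u) i := by
  have hJ : ∑ j, Jmat n i j • (u j - avg u) = 0 := by
    simp only [Jmat, Matrix.of_apply, ← smul_sum, sum_sub_avg_eq_zero, smul_zero]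
  rw [avg_matAct hcol]
  simp only [matAct, Matrix.sub_apply, sub_smul, sum_sub_distrib]
  rw [hJ, sub_zero]
  simp only [smul_sub, sum_sub_distrib, ← sum_smul, hrow, one_smul]

theorem sum_norm_matAct_sq_le (A : Matrix (Fin n) (Fin n) ℝ)
    (v : Fin n → EuclideanSpace ℝ (Fin d)) :
    ∑ i, ‖matAct A v i‖ ^ 2 ≤ ‖Matrix.toEuclideanCLM (𝕜 := ℝ) A‖ ^ 2 * ∑ i, ‖v i‖ ^ 2 := by
  set L := Matrix.toEuclideanCLM (𝕜 := ℝ) A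
  let column (k : Fin d) : EuclideanSpace ℝ (Fin n) := WithLp.toLp 2 fun j => v j k
  have hcolumn : ∀ k, ∑ i, (matAct A v i k) ^ 2 = ‖L (column k)‖ ^ 2 := fun k => by
    rw [EuclideanSpace.real_norm_sq_eq]
    simp [L, column, matAct, Matrix.mulVec, dotProduct]
  calc ∑ i, ‖matAct A v i‖ ^ 2 = ∑ k, ‖L (column k)‖ ^ 2 := by
        simp only [EuclideanSpace.real_norm_sq_eq, ← hcolumn]
        exact sum_comm
    _ ≤ ∑ k, ‖L‖ ^ 2 * ‖column k‖ ^ 2 := sum_le_sum fun k _ => by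
        rw [← mul_pow]; exact pow_le_pow_left₀ (norm_nonneg _) (L.le_opNorm _) 2
    _ = ‖L‖ ^ 2 * ∑ i, ‖v i‖ ^ 2 := by
        simp only [← mul_sum, EuclideanSpace.real_norm_sq_eq]
        rw [sum_comm]

theorem sum_norm_avg_sub_matAct_sq_le {W : Matrix (Fin n) (Fin n) ℝ}
    (hrow : ∀ i, ∑ j, W i j = 1) (hcol : ∀ j, ∑ i, W i j = 1)
    (u : Fin n → EuclideanSpace ℝ (Fin d)) :
    ∑ i, ‖avg (matAct W u) - matAct W u i‖ ^ 2 ≤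
      ‖Matrix.toEuclideanCLM (𝕜 := ℝ) (W - Jmat n)‖ ^ 2 * ∑ i, ‖avg u - u i‖ ^ 2 := by
  simpa only [← matAct_sub_avg hrow hcol, norm_sub_rev] using
    sum_norm_matAct_sq_le (W - Jmat n) (fun j => u j - avg u)

end Consensus

theorem prox_mixing_consensus_contraction_general {d n : ℕ} (ρ α : ℝ)
    (hα : 0 < α) (hαρ : α * ρ < 1)
    (h : EuclideanSpace ℝ (Fin d) → ℝ)
    (hwc : ConvexOn ℝ Set.univ (fun z => h z + (ρ / 2) * ‖z‖ ^ 2))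
    (W : Matrix (Fin n) (Fin n) ℝ) (hsym : W.IsSymm)
    (hrow : ∀ i, ∑ j, W i j = 1)
    (lam : ℝ) (hlam : lam = ‖Matrix.toEuclideanCLM (𝕜 := ℝ) (W - Jmat n)‖)
    (x ν u : Fin n → EuclideanSpace ℝ (Fin d))
    (hu : ∀ i, ∀ z, h (u i) + (1 / (2 * α)) * ‖u i - (x i - α • ν i)‖ ^ 2 ≤
      h z + (1 / (2 * α)) * ‖z - (x i - α • ν i)‖ ^ 2)
    (xplus : Fin n → EuclideanSpace ℝ (Fin d)) (hxplus : xplus = matAct W u) :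
    Real.sqrt (∑ i, ‖avg xplus - xplus i‖ ^ 2) ≤
      (lam / (1 - α * ρ)) *
        Real.sqrt (∑ i, ‖(x i - avg x) - α • (ν i - avg ν)‖ ^ 2) := by
  subst hxplus
  set y : Fin n → EuclideanSpace ℝ (Fin d) := fun i => x i - α • ν i
  have hcol : ∀ j, ∑ i, W i j = 1 := fun j => by simpa only [hsym.apply] using hrow j
  have hgap : 0 < 1 - α * ρ := sub_pos.2 hαρ
  have hprox : ∀ i j, ‖u i - u j‖ ≤ (1 - α * ρ)⁻¹ * ‖y i - y j‖ := fun i j =>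
    (le_inv_mul_iff₀ hgap).2 (prox_lipschitz hα hwc (hu i) (hu j))
  have hy : ∀ i, ‖avg y - y i‖ = ‖(x i - avg x) - α • (ν i - avg ν)‖ := fun i => by
    rw [avg_sub_smul, norm_sub_rev]
    congr 1
    module
  have hlam₀ : 0 ≤ lam := hlam ▸ norm_nonneg _
  rw [div_eq_mul_inv, ← Real.sqrt_sq (by positivity : 0 ≤ lam * (1 - α * ρ)⁻¹),
    ← Real.sqrt_mul (sq_nonneg _)]
  refine Real.sqrt_le_sqrt ?_
  calc ∑ i, ‖avg (matAct W u) - matAct W u i‖ ^ 2 ≤ lam ^ 2 * ∑ i, ‖avg u - u i‖ ^ 2 :=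
        hlam ▸ sum_norm_avg_sub_matAct_sq_le hrow hcol u
    _ ≤ lam ^ 2 * ((1 - α * ρ)⁻¹ ^ 2 * ∑ i, ‖avg y - y i‖ ^ 2) := by
        gcongr; exact sum_norm_avg_sub_sq_le hprox
    _ = (lam * (1 - α * ρ)⁻¹) ^ 2 * ∑ i, ‖(x i - avg x) - α • (ν i - avg ν)‖ ^ 2 := by
        simp only [hy]; ring

/-- One-step consensus contraction of the mixed proximal
update. -/
theorem prox_mixing_consensus_contraction {d n : ℕ} (ρ α : ℝ) (hρ : 0 ≤ ρ)
    (hα : 0 < α) (hαρ : α * ρ < 1)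
    (h : EuclideanSpace ℝ (Fin d) → ℝ)
    (hwc : ConvexOn ℝ Set.univ (fun z => h z + (ρ / 2) * ‖z‖ ^ 2))
    (W : Matrix (Fin n) (Fin n) ℝ) (hsym : W.IsSymm) (hnn : ∀ i j, 0 ≤ W i j)
    (hrow : ∀ i, ∑ j, W i j = 1)
    (lam : ℝ) (hlam : lam = ‖Matrix.toEuclideanCLM (𝕜 := ℝ) (W - Jmat n)‖)
    (x ν u : Fin n → EuclideanSpace ℝ (Fin d))
    (hu : ∀ i, ∀ z, h (u i) + (1 / (2 * α)) * ‖u i - (x i - α • ν i)‖ ^ 2 ≤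
      h z + (1 / (2 * α)) * ‖z - (x i - α • ν i)‖ ^ 2)
    (xplus : Fin n → EuclideanSpace ℝ (Fin d)) (hxplus : xplus = matAct W u) :
    Real.sqrt (∑ i, ‖avg xplus - xplus i‖ ^ 2) ≤
      (lam / (1 - α * ρ)) *
        Real.sqrt (∑ i, ‖(x i - avg x) - α • (ν i - avg ν)‖ ^ 2) :=
  prox_mixing_consensus_contraction_general ρ α hα hαρ h hwc W hsym hrow lam hlam x ν u hu xplus
    hxplus

end
end
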